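/- arXiv:2107.14404 — 5 statements merged into one kernel-verified Lean document; each statement's English description precedes it below -/
import Mathlib

section
/- Let I be a finite set of nodes, L a finite subset of I × I (directed links), P a nonempty finite index set of paths, d : L → ℝ link delays, and c : I → ℝ. Let r : P → ℝ and z : P → L → ℝ satisfy: r(p) ≥ 0 for all p, Σ_{p∈P} r(p) = 1, 0 ≤ z(p)(e) ≤ 1 for all p and e ∈ L, and the flow-conservation equations Σ_{j : (j,i)∈L} z(p)(j,i) − Σ_{j : (i,j)∈L} z(p)(i,j) = c(i) for every p ∈ P and i ∈ I. Set θ = max_{p∈P} Σ_{e∈L} d(e)·z(p)(e) and define r̄(e) = Σ_{p∈P} r(p)·z(p)(e) for each e ∈ L. Then: (i) 0 ≤ r̄(e) ≤ 1 for every e ∈ L; (ii) Σ_{j : (j,i)∈L} r̄(j,i) − Σ_{j : (i,j)∈L} r̄(i,j) = c(i) for every i ∈ I; and (iii) Σ_{e∈L} d(e)·r̄(e) ≤ θ. -/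
theorem stmt_3 {ν ι : Type*} [DecidableEq ν]
    (I : Finset ν) (L : Finset (ν × ν)) (hL : L ⊆ I ×ˢ I)
    (P : Finset ι) (hP : P.Nonempty)
    (d : ν × ν → ℝ) (c : ν → ℝ)
    (r : ι → ℝ) (z : ι → ν × ν → ℝ)
    (hr : ∀ p ∈ P, 0 ≤ r p) (hsum : ∑ p ∈ P, r p = 1)
    (hz0 : ∀ p ∈ P, ∀ e ∈ L, 0 ≤ z p e)
    (hz1 : ∀ p ∈ P, ∀ e ∈ L, z p e ≤ 1)
    (hcons : ∀ p ∈ P, ∀ i ∈ I,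
      (∑ e ∈ L.filter (fun e => e.2 = i), z p e) -
      (∑ e ∈ L.filter (fun e => e.1 = i), z p e) = c i)
    (θ : ℝ) (hθ : θ = P.sup' hP (fun p => ∑ e ∈ L, d e * z p e))
    (rbar : ν × ν → ℝ)
    (hrbar : ∀ e ∈ L, rbar e = ∑ p ∈ P, r p * z p e) :
    (∀ e ∈ L, 0 ≤ rbar e ∧ rbar e ≤ 1) ∧
    (∀ i ∈ I,
      (∑ e ∈ L.filter (fun e => e.2 = i), rbar e) -
      (∑ e ∈ L.filter (fun e => e.1 = i), rbar e) = c i) ∧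
    (∑ e ∈ L, d e * rbar e ≤ θ) := by
  refine ⟨?_, ?_, ?_⟩
  · intro e he
    rw [hrbar e he]
    constructor
    · exact Finset.sum_nonneg fun p hp => mul_nonneg (hr p hp) (hz0 p hp e he)
    · calc ∑ p ∈ P, r p * z p e ≤ ∑ p ∈ P, r p * 1 :=
            Finset.sum_le_sum fun p hp =>
              mul_le_mul_of_nonneg_left (hz1 p hp e he) (hr p hp)
        _ = 1 := by simp [hsum]
  · intro i hi
    have h1 : ∀ S : Finset (ν × ν), S ⊆ L →
        ∑ e ∈ S, rbar e = ∑ p ∈ P, r p * ∑ e ∈ S, z p e := by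
      intro S hS
      rw [Finset.sum_congr rfl fun e he => hrbar e (hS he), Finset.sum_comm]
      simp [Finset.mul_sum]
    rw [h1 _ (Finset.filter_subset _ _), h1 _ (Finset.filter_subset _ _),
      ← Finset.sum_sub_distrib]
    calc ∑ p ∈ P, (r p * ∑ e ∈ L.filter (fun e => e.2 = i), z p e -
            r p * ∑ e ∈ L.filter (fun e => e.1 = i), z p e)
        = ∑ p ∈ P, r p * c i := by
          refine Finset.sum_congr rfl fun p hp => ?_
          rw [← mul_sub, hcons p hp i hi]
      _ = c i := by rw [← Finset.sum_mul, hsum, one_mul]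
  · rw [Finset.sum_congr rfl fun e he => by rw [hrbar e he]]
    have : ∑ e ∈ L, d e * ∑ p ∈ P, r p * z p e
        = ∑ p ∈ P, r p * ∑ e ∈ L, d e * z p e := by
      simp_rw [Finset.mul_sum]
      rw [Finset.sum_comm]
      exact Finset.sum_congr rfl fun p _ => Finset.sum_congr rfl fun e _ => by ring
    rw [this, hθ]
    calc ∑ p ∈ P, r p * ∑ e ∈ L, d e * z p e
        ≤ ∑ p ∈ P, r p * P.sup' hP (fun q => ∑ e ∈ L, d e * z q e) :=
          Finset.sum_le_sum fun p hp =>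
            mul_le_mul_of_nonneg_left
              (Finset.le_sup' (fun q => ∑ e ∈ L, d e * z q e) hp) (hr p hp)
      _ = _ := by rw [← Finset.sum_mul, hsum, one_mul]
end

section
/- Consider the set T of real numbers θ for which there exist functions r, z_a, z_b, r_a, r_b from {1,2} to ℝ such that: z_a(p) + z_b(p) = 1 for p = 1,2; r_a(1) + r_a(2) ≤ 1/2; r_b(1) + r_b(2) ≤ 1/2; r(1) + r(2) = 1; the linearized constraints r_a(p) ≤ r(p), r_b(p) ≤ r(p), r_a(p) ≤ z_a(p), r_b(p) ≤ z_b(p), r_a(p) ≥ r(p) + z_a(p) − 1, r_b(p) ≥ r(p) + z_b(p) − 1 for p = 1,2; θ ≥ z_a(p) + 2·z_b(p) for p = 1,2; and 0 ≤ r(p), r_a(p), r_b(p), z_a(p), z_b(p) ≤ 1 for p = 1,2. Then the least element of T is 5/4 (i.e., 5/4 ∈ T and every θ ∈ T satisfies θ ≥ 5/4). -/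
theorem stmt_7 :
    IsLeast {θ : ℝ | ∃ r za zb ra rb : Fin 2 → ℝ,
      (∀ p, za p + zb p = 1) ∧
      ra 0 + ra 1 ≤ 1/2 ∧
      rb 0 + rb 1 ≤ 1/2 ∧
      r 0 + r 1 = 1 ∧
      (∀ p, ra p ≤ r p) ∧
      (∀ p, rb p ≤ r p) ∧
      (∀ p, ra p ≤ za p) ∧
      (∀ p, rb p ≤ zb p) ∧
      (∀ p, ra p ≥ r p + za p - 1) ∧
      (∀ p, rb p ≥ r p + zb p - 1) ∧
      (∀ p, θ ≥ za p + 2 * zb p) ∧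
      (∀ p, 0 ≤ r p ∧ r p ≤ 1 ∧ 0 ≤ ra p ∧ ra p ≤ 1 ∧ 0 ≤ rb p ∧ rb p ≤ 1 ∧
        0 ≤ za p ∧ za p ≤ 1 ∧ 0 ≤ zb p ∧ zb p ≤ 1)} (5/4) := by
  constructor
  · refine ⟨fun _ => 1/2, fun _ => 3/4, fun _ => 1/4, fun _ => 1/4, fun _ => 1/4, ?_, ?_, ?_, ?_, ?_, ?_, ?_, ?_, ?_, ?_, ?_, ?_⟩ <;>
      intros <;> norm_num
  · rintro θ ⟨r, za, zb, ra, rb, hz, hra, hrb, hr, _, _, _, _, h9, _, hθ, _⟩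
    have := hz 0; have := hz 1
    have := h9 0; have := h9 1
    have := hθ 0; have := hθ 1
    linarith
end

section
/- Let K (services) and V (cloud nodes) be finite sets, for each k ∈ K let V(k) ⊆ V be nonempty, let t > 0 be a real number, let μ : V → ℝ satisfy μ(v) > 0 for all v, and let λ : K → ℝ satisfy λ(k) ≥ μ(v)/t for every k ∈ K and every v ∈ V(k). Suppose x : V → K → ℝ and y : V → ℝ satisfy: x(v)(k) ≥ 0 for all v, k; x(v)(k) = 0 whenever v ∉ V(k); Σ_{v∈V(k)} x(v)(k) = 1 for every k ∈ K; and Σ_{k∈K} λ(k)·x(v)(k) ≤ μ(v)·y(v) for every v ∈ V. Then Σ_{v∈V} y(v) ≥ |K|/t. -/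
theorem stmt_9 {κ ν : Type*} (K : Finset κ) (V : Finset ν)
    (Vk : κ → Finset ν)
    (hVkV : ∀ k ∈ K, Vk k ⊆ V) (hVkne : ∀ k ∈ K, (Vk k).Nonempty)
    (t : ℝ) (ht : 0 < t)
    (μ : ν → ℝ) (hμ : ∀ v ∈ V, 0 < μ v)
    (lam : κ → ℝ) (hlam : ∀ k ∈ K, ∀ v ∈ Vk k, lam k ≥ μ v / t)
    (x : ν → κ → ℝ) (y : ν → ℝ)
    (hx0 : ∀ v ∈ V, ∀ k ∈ K, 0 ≤ x v k)
    (hxsupp : ∀ k ∈ K, ∀ v ∈ V, v ∉ Vk k → x v k = 0)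
    (hxsum : ∀ k ∈ K, ∑ v ∈ Vk k, x v k = 1)
    (hcap : ∀ v ∈ V, ∑ k ∈ K, lam k * x v k ≤ μ v * y v) :
    ∑ v ∈ V, y v ≥ (K.card : ℝ) / t := by
  have key : ∀ v ∈ V, ∑ k ∈ K, x v k / t ≤ y v := by
    intro v hv
    have hμv := hμ v hv
    have h1 : ∑ k ∈ K, x v k / t ≤ ∑ k ∈ K, lam k * x v k / μ v := by
      apply Finset.sum_le_sum
      intro k hk
      by_cases hvk : v ∈ Vk k
      · have := hlam k hk v hvk
        have hx := hx0 v hv k hk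
        rw [div_le_div_iff₀ ht hμv]
        calc x v k * μ v = μ v / t * x v k * t := by field_simp
          _ ≤ lam k * x v k * t := by
              apply mul_le_mul_of_nonneg_right (mul_le_mul_of_nonneg_right this hx) ht.le
      · rw [hxsupp k hk v hv hvk]; simp
    refine h1.trans ?_
    rw [← Finset.sum_div, div_le_iff₀ hμv]
    linarith [hcap v hv, mul_comm (μ v) (y v)]
  have h2 : ∑ v ∈ V, ∑ k ∈ K, x v k / t ≤ ∑ v ∈ V, y v :=
    Finset.sum_le_sum key
  have h3 : ∑ v ∈ V, ∑ k ∈ K, x v k / t = (K.card : ℝ) / t := by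
    rw [Finset.sum_comm]
    have : ∀ k ∈ K, ∑ v ∈ V, x v k / t = 1 / t := by
      intro k hk
      rw [← Finset.sum_div]
      congr 1
      rw [← hxsum k hk]
      exact (Finset.sum_subset (hVkV k hk) (fun v hv hnv => hxsupp k hk v hv hnv)).symm
    rw [Finset.sum_congr rfl this]
    simp [div_eq_mul_inv]
  linarith
end

section
/- Let K (services) and V (cloud nodes) be finite sets, for each k ∈ K let V(k) ⊆ V be nonempty, let t > 0 be a real number, let μ : V → ℝ satisfy μ(v) > 0 for all v, and let λ : K → ℝ satisfy λ(k) ≥ μ(v)/t for every k ∈ K and every v ∈ V(k). Suppose there exists a binary feasible solution, i.e., x̄ : V → K → ℝ and ȳ : V → ℝ with x̄(v)(k) ∈ {0,1} and ȳ(v) ∈ {0,1} for all v, k, x̄(v)(k) = 0 whenever v ∉ V(k), Σ_{v∈V(k)} x̄(v)(k) = 1 for every k, and Σ_{k∈K} λ(k)·x̄(v)(k) ≤ μ(v)·ȳ(v) for every v. Suppose also (x', y') is any fractional feasible solution, i.e., x'(v)(k) ≥ 0, x'(v)(k) = 0 for v ∉ V(k), Σ_{v∈V(k)} x'(v)(k)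 = 1 for every k, and Σ_{k∈K} λ(k)·x'(v)(k) ≤ μ(v)·y'(v) for every v. Then there exists a binary feasible solution (x̄, y'') (with y''(v) ∈ {0,1} and Σ_{k} λ(k) x̄(v)(k) ≤ μ(v) y''(v) for all v) such that Σ_{v∈V} y''(v) ≤ t·Σ_{v∈V} y'(v). -/
theorem stmt_10 {κ ν : Type*} (K : Finset κ) (V : Finset ν)
    (Vk : κ → Finset ν)
    (hVkV : ∀ k ∈ K, Vk k ⊆ V) (hVkne : ∀ k ∈ K, (Vk k).Nonempty)
    (t : ℝ) (ht : 0 < t)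
    (μ : ν → ℝ) (hμ : ∀ v ∈ V, 0 < μ v)
    (lam : κ → ℝ) (hlam : ∀ k ∈ K, ∀ v ∈ Vk k, lam k ≥ μ v / t)
    -- a binary feasible solution (x̄, ȳ) exists
    (xbar : ν → κ → ℝ) (ybar : ν → ℝ)
    (hxbar01 : ∀ v ∈ V, ∀ k ∈ K, xbar v k = 0 ∨ xbar v k = 1)
    (hybar01 : ∀ v ∈ V, ybar v = 0 ∨ ybar v = 1)
    (hxbarsupp : ∀ k ∈ K, ∀ v ∈ V, v ∉ Vk k → xbar v k = 0)
    (hxbarsum : ∀ k ∈ K, ∑ v ∈ Vk k, xbar v k = 1)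
    (hxbarcap : ∀ v ∈ V, ∑ k ∈ K, lam k * xbar v k ≤ μ v * ybar v)
    -- a fractional feasible solution (x', y')
    (x' : ν → κ → ℝ) (y' : ν → ℝ)
    (hx'0 : ∀ v ∈ V, ∀ k ∈ K, 0 ≤ x' v k)
    (hx'supp : ∀ k ∈ K, ∀ v ∈ V, v ∉ Vk k → x' v k = 0)
    (hx'sum : ∀ k ∈ K, ∑ v ∈ Vk k, x' v k = 1)
    (hx'cap : ∀ v ∈ V, ∑ k ∈ K, lam k * x' v k ≤ μ v * y' v) :
    ∃ y'' : ν → ℝ,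
      (∀ v ∈ V, y'' v = 0 ∨ y'' v = 1) ∧
      (∀ v ∈ V, ∑ k ∈ K, lam k * xbar v k ≤ μ v * y'' v) ∧
      ∑ v ∈ V, y'' v ≤ t * ∑ v ∈ V, y' v := by
  classical
  refine ⟨fun v => if 0 < ∑ k ∈ K, lam k * xbar v k then 1 else 0, ?_, ?_, ?_⟩
  · intro v hv
    by_cases h : 0 < ∑ k ∈ K, lam k * xbar v k <;> simp [h]
  · intro v hv
    by_cases h : 0 < ∑ k ∈ K, lam k * xbar v k
    · simp only [if_pos h, mul_one]
      have hc := hxbarcap v hv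
      rcases hybar01 v hv with h0 | h1
      · rw [h0, mul_zero] at hc; linarith
      · rw [h1, mul_one] at hc; exact hc
    · simp only [if_neg h, mul_zero]
      push_neg at h; exact h
  · -- upper bound: each active node hosts ≥ 1 service
    have hub : ∑ v ∈ V, (if 0 < ∑ k ∈ K, lam k * xbar v k then (1:ℝ) else 0)
        ≤ ∑ v ∈ V, ∑ k ∈ K, xbar v k := by
      refine Finset.sum_le_sum fun v hv => ?_
      have hnn : ∀ k ∈ K, (0:ℝ) ≤ xbar v k := fun k hk => by
        rcases hxbar01 v hv k hk with h | h <;> simp [h]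
      by_cases h : 0 < ∑ k ∈ K, lam k * xbar v k
      · simp only [if_pos h]
        obtain ⟨k0, hk0, hne⟩ := Finset.exists_ne_zero_of_sum_ne_zero h.ne'
        have hx1 : xbar v k0 = 1 := by
          rcases hxbar01 v hv k0 hk0 with h0 | h1
          · exact absurd (by rw [h0, mul_zero]) hne
          · exact h1
        calc (1:ℝ) = xbar v k0 := hx1.symm
          _ ≤ ∑ k ∈ K, xbar v k := Finset.single_le_sum hnn hk0
      · simp only [if_neg h]
        exact Finset.sum_nonneg hnn
    have hsum_eq : ∑ v ∈ V, ∑ k ∈ K, xbar v k = (K.card : ℝ) := by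
      rw [Finset.sum_comm]
      have h1 : ∀ k ∈ K, ∑ v ∈ V, xbar v k = 1 := fun k hk => by
        rw [← Finset.sum_subset (hVkV k hk)
          (fun v hv hvn => hxbarsupp k hk v hv hvn)]
        exact hxbarsum k hk
      rw [Finset.sum_congr rfl h1]
      simp
    -- lower bound: t * ∑ y' ≥ |K|
    have hlow : ∀ v ∈ V, ∑ k ∈ K, x' v k ≤ t * y' v := by
      intro v hv
      have hμv := hμ v hv
      have h1 : μ v * ∑ k ∈ K, x' v k ≤ t * ∑ k ∈ K, lam k * x' v k := by
        rw [Finset.mul_sum, Finset.mul_sum]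
        refine Finset.sum_le_sum fun k hk => ?_
        by_cases hvk : v ∈ Vk k
        · have := hlam k hk v hvk
          have hlk : μ v ≤ t * lam k := by
            rw [ge_iff_le, div_le_iff₀ ht] at this; linarith [this]
          have := mul_le_mul_of_nonneg_right hlk (hx'0 v hv k hk)
          linarith [this]
        · simp [hx'supp k hk v hv hvk]
      have h2 : t * ∑ k ∈ K, lam k * x' v k ≤ t * (μ v * y' v) :=
        mul_le_mul_of_nonneg_left (hx'cap v hv) ht.le
      have h3 : μ v * ∑ k ∈ K, x' v k ≤ μ v * (t * y' v) := by
        calc μ v * ∑ k ∈ K, x' v k ≤ t * (μ v * y' v) := le_trans h1 h2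
          _ = μ v * (t * y' v) := by ring
      exact le_of_mul_le_mul_left h3 hμv
    have hlb : (K.card : ℝ) ≤ t * ∑ v ∈ V, y' v := by
      have : (K.card : ℝ) = ∑ v ∈ V, ∑ k ∈ K, x' v k := by
        rw [Finset.sum_comm]
        have h1 : ∀ k ∈ K, ∑ v ∈ V, x' v k = 1 := fun k hk => by
          rw [← Finset.sum_subset (hVkV k hk)
            (fun v hv hvn => hx'supp k hk v hv hvn)]
          exact hx'sum k hk
        rw [Finset.sum_congr rfl h1]
        simp
      rw [this, Finset.mul_sum]
      exact Finset.sum_le_sum hlow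
    linarith
end

section
/- Let K and V be finite sets, for each k ∈ K let V(k) ⊆ V, and let u be a natural number with |V(k)| ≤ u for every k ∈ K. Let w : K → ℝ satisfy w(k) ≥ 0 for all k and Σ_{k : v∈V(k)} w(k) ≤ 1 for every v ∈ V (dual feasibility), and let y : V → ℝ satisfy: for every v ∈ V with y(v) > 0, Σ_{k : v∈V(k)} w(k) = 1 (complementary slackness). Then the number of nodes v ∈ V with y(v) > 0 is at most u·Σ_{k∈K} w(k). -/
theorem stmt_11 {κ ν : Type*} [DecidableEq ν] (K : Finset κ) (V : Finset ν)
    (Vk : κ → Finset ν) (hVkV : ∀ k ∈ K, Vk k ⊆ V) (u : ℕ) (hu : ∀ k ∈ K, (Vk k).card ≤ u)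
    (w : κ → ℝ) (hw0 : ∀ k ∈ K, 0 ≤ w k)
    (hwfeas : ∀ v ∈ V, ∑ k ∈ K.filter (fun k => v ∈ Vk k), w k ≤ 1)
    (y : ν → ℝ)
    (hcs : ∀ v ∈ V, 0 < y v → ∑ k ∈ K.filter (fun k => v ∈ Vk k), w k = 1) :
    ((V.filter (fun v => 0 < y v)).card : ℝ) ≤ u * ∑ k ∈ K, w k := by
  classical
  set S := V.filter (fun v => 0 < y v) with hS
  have h1 : (S.card : ℝ) = ∑ v ∈ S, ∑ k ∈ K.filter (fun k => v ∈ Vk k), w k := by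
    rw [Finset.cast_card]
    refine Finset.sum_congr rfl ?_
    intro v hv
    rw [hS, Finset.mem_filter] at hv
    exact (hcs v hv.1 hv.2).symm
  rw [h1]
  have h2 : ∀ v ∈ S, ∑ k ∈ K.filter (fun k => v ∈ Vk k), w k
      = ∑ k ∈ K, if v ∈ Vk k then w k else 0 := by
    intro v _
    rw [Finset.sum_filter]
  rw [Finset.sum_congr rfl h2, Finset.sum_comm, Finset.mul_sum]
  refine Finset.sum_le_sum ?_
  intro k hk
  have : ∑ v ∈ S, (if v ∈ Vk k then w k else 0) = (S.filter (fun v => v ∈ Vk k)).card * w k := by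
    rw [← Finset.sum_filter, Finset.sum_const, nsmul_eq_mul]
  rw [this]
  refine mul_le_mul_of_nonneg_right ?_ (hw0 k hk)
  have hcard : (S.filter (fun v => v ∈ Vk k)).card ≤ u := by
    calc (S.filter (fun v => v ∈ Vk k)).card ≤ (Vk k).card := by
          apply Finset.card_le_card
          intro v hv
          exact (Finset.mem_filter.mp hv).2
      _ ≤ u := hu k hk
  exact_mod_cast hcard
end
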